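/- If k is odd, m is not congruent to 2 mod 3, e = (k + f_m)/2 + ℓ·f_m with ℓ ≥ 0, and d = e² + (2ℓ+1)·f_{m-1} + 1, then (x, y) = (f_m·e + f_{m-1}, f_m) satisfies x² - d·y² = (-1)^{m+1}. -/
import Mathlib


def fseq (k : ℤ) : ℕ → ℤ
  | 0 => 1
  | 1 => 0
  | (n+2) => k * fseq k (n+1) + fseq k n

lemma fseq_cassini (k : ℤ) : ∀ n, fseq k n * fseq k (n+2) - fseq k (n+1)^2 = (-1)^n
  | 0 => by simp [fseq]
  | (n+1) => by
    have ih := fseq_cassini k n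
    have h3 : fseq k (n+3) = k * fseq k (n+2) + fseq k (n+1) := rfl
    have h2 : fseq k (n+2) = k * fseq k (n+1) + fseq k n := rfl
    show fseq k (n+1) * fseq k (n+3) - fseq k (n+2)^2 = (-1)^(n+1)
    rw [h3, pow_succ]
    linear_combination (-1 : ℤ) * ih + (- fseq k (n+2)) * h2

theorem stmt_11 (k : ℤ) (hk : 0 < k) (hko : Odd k) (m : ℕ) (hm : 1 ≤ m)
    (hm3 : m % 3 ≠ 2) (ℓ : ℤ) (hℓ : 0 ≤ ℓ) (e d : ℤ)
    (he : 2 * e = (k + fseq k (m + 2)) + 2 * ℓ * fseq k (m + 2))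
    (hd : d = e ^ 2 + (2 * ℓ + 1) * fseq k (m + 1) + 1) :
    (fseq k (m + 2) * e + fseq k (m + 1)) ^ 2 - d * (fseq k (m + 2)) ^ 2 =
      (-1) ^ (m + 1) := by
  have c := fseq_cassini k (m+1)
  have h3 : fseq k (m+3) = k * fseq k (m+2) + fseq k (m+1) := rfl
  rw [show m+1+2 = m+3 from rfl, h3] at c
  subst hd
  linear_combination fseq k (m + 2) * fseq k (m + 1) * he + c
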